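/- Amalgamation compatibility in P_Σ-style side-condition posets: suppose M_p and M_q are finite ∈-chains of countable sets with M_q ⊆ M, M ∈ M_p, and M_p ∩ M ⊆ M_q, and every element of M_q is an element of M. Then M_p ∪ M_q is a finite ∈-chain, provided additionally that for every P ∈ M_q \ M_p there is S ∈ M_p ∩ M with S ∈ P and P ∈ S⁺, where S⁺ is the least element of M_p ∪ {M} above S. -/
import Mathlib


open ZFSet

/-- amalgamation compatibility in `P_Σ`-style side-condition posets:
if `M_p` and `M_q` are finite ∈-chains of countable sets, all members of `M_q` are
elements of `M ∈ M_p`, `M_p ∩ M ⊆ M_q`, membership is transitive along the chains,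
and every `P ∈ M_q ∖ M_p` sits in an interval `(S, S⁺)` of `M_p ∪ {M}` with
`S ∈ M_p ∩ M`, then `M_p ∪ M_q` is again a finite ∈-chain. -/
theorem stmt14 (Mp Mq : Finset ZFSet) (M : ZFSet)
    (hctble : ∀ A : ZFSet, (A ∈ Mp ∨ A ∈ Mq) → A.toSet.Countable)
    (hMpchain : ∀ A ∈ Mp, ∀ B ∈ Mp, A = B ∨ A ∈ B ∨ B ∈ A)
    (hMqchain : ∀ A ∈ Mq, ∀ B ∈ Mq, A = B ∨ A ∈ B ∨ B ∈ A)
    (hMMp : M ∈ Mp)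
    (hMqM : ∀ P ∈ Mq, P ∈ M)
    (hcap : ∀ P ∈ Mp, P ∈ M → P ∈ Mq)
    (htrans : ∀ A B C : ZFSet, (A ∈ Mp ∨ A ∈ Mq) → (B ∈ Mp ∨ B ∈ Mq) →
      (C ∈ Mp ∨ C ∈ Mq) → A ∈ B → B ∈ C → A ∈ C)
    (hinter : ∀ P ∈ Mq, P ∉ Mp → ∃ S ∈ Mp, S ∈ M ∧ S ∈ P ∧
      ∃ Sp : ZFSet, (Sp ∈ Mp ∨ Sp = M) ∧ S ∈ Sp ∧
        (∀ T : ZFSet, (T ∈ Mp ∨ T = M) → S ∈ T → T = Sp ∨ Sp ∈ T) ∧ P ∈ Sp) :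
    ∀ A : ZFSet, (A ∈ Mp ∨ A ∈ Mq) → ∀ B : ZFSet, (B ∈ Mp ∨ B ∈ Mq) →
      A = B ∨ A ∈ B ∨ B ∈ A := by
  have key : ∀ A ∈ Mp, ∀ B ∈ Mq, B ∉ Mp → A = B ∨ A ∈ B ∨ B ∈ A := by
    intro A hA B hB hBnp
    obtain ⟨S, hSMp, hSM, hSB, Sp, hSp, hSSp, hmin, hBSp⟩ := hinter B hB hBnp
    rcases hMpchain A hA S hSMp with rfl | hAS | hSA
    · exact Or.inr (Or.inl hSB)
    · exact Or.inr (Or.inl (htrans A S B (Or.inl hA) (Or.inl hSMp) (Or.inr hB) hAS hSB))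
    · rcases hmin A (Or.inl hA) hSA with rfl | hSpA
      · exact Or.inr (Or.inr hBSp)
      · rcases hSp with hSpMp | rfl
        · exact Or.inr (Or.inr (htrans B Sp A (Or.inr hB) (Or.inl hSpMp) (Or.inl hA) hBSp hSpA))
        · exact Or.inr (Or.inr (htrans B Sp A (Or.inr hB) (Or.inl hMMp) (Or.inl hA) hBSp hSpA))
  intro A hA B hB
  rcases hA with hA | hA <;> rcases hB with hB | hB
  · exact hMpchain A hA B hB
  · by_cases hBp : B ∈ Mp
    · exact hMpchain A hA B hBp
    · exact key A hA B hB hBp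
  · by_cases hAp : A ∈ Mp
    · exact hMpchain A hAp B hB
    · rcases key B hB A hA hAp with h | h | h
      · exact Or.inl h.symm
      · exact Or.inr (Or.inr h)
      · exact Or.inr (Or.inl h)
  · exact hMqchain A hA B hB
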